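/- arXiv:1812.10442 — 5 statements merged into one kernel-verified Lean document; each statement's English description precedes it below -/
import Mathlib

section
/- There exist t₀ > 0 and C > 0 such that for all z₁, z₂ in the hyperbolic upper half-plane ℍ satisfying d(z₁, z₂) ≤ d(z₁, z₂ + 2πi) for every integer i, and for all t ∈ (0, t₀], the series ∑_{i ∈ ℤ} exp(−d(z₁, z₂ + 2πi)²/t) converges and is bounded by C · ((Im z₁ + 1)(Im z₂ + 1))^{1/2} · exp(−d(z₁, z₂)²/(2t)). -/
open UpperHalfPlane Filter

private lemma log_le_arsinh {x : ℝ} (hx : 0 ≤ x) : Real.log (1 + x) ≤ Real.arsinh x := by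
  rw [Real.arsinh]
  apply Real.log_le_log (by positivity)
  have h1 : (1:ℝ) ≤ Real.sqrt (1 + x ^ 2) := by
    nlinarith [Real.sq_sqrt (show (0:ℝ) ≤ 1 + x^2 by positivity),
      Real.sqrt_nonneg (1 + x^2)]
  linarith

private lemma aux_hasSum (a : ℝ) (ha : 0 < a) :
    HasSum (fun n : ℕ => (1/a) * (1 + a*n)⁻¹ - (1/a) * (1 + a*(n+1))⁻¹) (1/a) := by
  have hpos : ∀ n : ℕ, (0:ℝ) < 1 + a * n := fun n => by positivity
  have hnn : ∀ n : ℕ, 0 ≤ (1/a) * (1 + a*(n:ℝ))⁻¹ - (1/a) * (1 + a*((n:ℝ)+1))⁻¹ := by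
    intro n
    have h0 := hpos n
    have h1 : (0:ℝ) < 1 + a * ((n:ℝ)+1) := by positivity
    have : (1 + a*(n:ℝ))⁻¹ ≥ (1 + a*((n:ℝ)+1))⁻¹ := by
      apply inv_anti₀ h0; linarith
    have ha' : 0 < 1/a := by positivity
    nlinarith
  rw [hasSum_iff_tendsto_nat_of_nonneg hnn]
  have heq : ∀ n : ℕ, ∑ i ∈ Finset.range n,
      ((1/a) * (1 + a*(i:ℝ))⁻¹ - (1/a) * (1 + a*((i:ℝ)+1))⁻¹)
      = (1/a) * (1 + a*(0:ℝ))⁻¹ - (1/a) * (1 + a*(n:ℝ))⁻¹ := by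
    intro n
    have := Finset.sum_range_sub' (fun i : ℕ => (1/a) * (1 + a*(i:ℝ))⁻¹) n
    simpa [Nat.cast_add, Nat.cast_one] using this
  simp only [heq]
  have h2 : Tendsto (fun n : ℕ => a * (n:ℝ)) atTop atTop :=
    (tendsto_natCast_atTop_atTop (R := ℝ)).const_mul_atTop ha
  have h3 : Tendsto (fun n : ℕ => 1 + a * (n:ℝ)) atTop atTop :=
    tendsto_atTop_add_const_left _ 1 h2
  have h4 : Tendsto (fun n : ℕ => (1 + a * (n:ℝ))⁻¹) atTop (nhds 0) :=
    h3.inv_tendsto_atTop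
  have h5 : Tendsto (fun n : ℕ => (1/a) * (1 + a*(0:ℝ))⁻¹ - (1/a) * (1 + a*(n:ℝ))⁻¹)
      atTop (nhds ((1/a) * (1 + a*(0:ℝ))⁻¹ - (1/a) * 0)) :=
    tendsto_const_nhds.sub (h4.const_mul (1/a))
  simpa using h5

private lemma aux_nat (a : ℝ) (ha : 0 < a) :
    Summable (fun n : ℕ => ((1 + a*((n:ℝ)+1))⁻¹)^2) ∧
      ∑' n : ℕ, ((1 + a*((n:ℝ)+1))⁻¹)^2 ≤ 1/a := by
  have hts := aux_hasSum a ha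
  have hle : ∀ n : ℕ, ((1 + a*((n:ℝ)+1))⁻¹)^2 ≤
      (1/a) * (1 + a*(n:ℝ))⁻¹ - (1/a) * (1 + a*((n:ℝ)+1))⁻¹ := by
    intro n
    have h0 : (0:ℝ) < 1 + a*(n:ℝ) := by positivity
    have h1 : (0:ℝ) < 1 + a*((n:ℝ)+1) := by positivity
    have key : (1/a) * (1 + a*(n:ℝ))⁻¹ - (1/a) * (1 + a*((n:ℝ)+1))⁻¹
        = ((1 + a*(n:ℝ)) * (1 + a*((n:ℝ)+1)))⁻¹ := by
      field_simp
      ring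
    rw [key, inv_pow]
    apply inv_anti₀ (by positivity)
    nlinarith
  have hsum : Summable (fun n : ℕ => ((1 + a*((n:ℝ)+1))⁻¹)^2) :=
    Summable.of_nonneg_of_le (fun n => by positivity) hle hts.summable
  refine ⟨hsum, ?_⟩
  calc ∑' n : ℕ, ((1 + a*((n:ℝ)+1))⁻¹)^2
      ≤ ∑' n : ℕ, ((1/a) * (1 + a*(n:ℝ))⁻¹ - (1/a) * (1 + a*((n:ℝ)+1))⁻¹) :=
        Summable.tsum_le_tsum hle hsum hts.summable
    _ = 1/a := hts.tsum_eq

set_option maxHeartbeats 1000000 in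
/-- There exist `t₀ > 0` and `C > 0` such that for all `z₁ z₂ : ℍ`
satisfying `d(z₁, z₂) ≤ d(z₁, z₂ + 2πi)` for every integer `i`, and for all
`t ∈ (0, t₀]`, the series `∑_{i ∈ ℤ} exp(−d(z₁, z₂ + 2πi)²/t)` converges and is bounded by
`C · ((Im z₁ + 1)(Im z₂ + 1))^{1/2} · exp(−d(z₁, z₂)²/(2t))`. -/
theorem heat_kernel_sum_over_deck_transformations_bound :
    ∃ t₀ > (0 : ℝ), ∃ C > (0 : ℝ), ∀ z₁ z₂ : UpperHalfPlane,
      (∀ i : ℤ, dist z₁ z₂ ≤ dist z₁ ((2 * Real.pi * (i : ℝ)) +ᵥ z₂)) →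
      ∀ t : ℝ, t ∈ Set.Ioc 0 t₀ →
        Summable (fun i : ℤ =>
          Real.exp (-dist z₁ ((2 * Real.pi * (i : ℝ)) +ᵥ z₂) ^ 2 / t)) ∧
        ∑' i : ℤ, Real.exp (-dist z₁ ((2 * Real.pi * (i : ℝ)) +ᵥ z₂) ^ 2 / t) ≤
          C * Real.sqrt ((z₁.im + 1) * (z₂.im + 1)) *
            Real.exp (-dist z₁ z₂ ^ 2 / (2 * t)) := by
  have hπ := Real.pi_pos
  refine ⟨1, one_pos, Real.exp (1/2) * (1 + 4/Real.pi), by positivity, ?_⟩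
  intro z₁ z₂ h t ht
  obtain ⟨ht0, ht1⟩ := ht
  have hy₁ : 0 < z₁.im := z₁.im_pos
  have hy₂ : 0 < z₂.im := z₂.im_pos
  set s : ℝ := Real.sqrt (z₁.im * z₂.im) with hsdef
  have hs : 0 < s := Real.sqrt_pos.mpr (by positivity)
  set a : ℝ := Real.pi / (2*s) with hadef
  have ha : 0 < a := by positivity
  set x : ℝ := z₁.re - z₂.re with hxdef
  set B : ℤ → ℝ := fun i => dist (z₁:ℂ) (((2*Real.pi*(i:ℝ) : ℝ):ℂ) + (z₂:ℂ)) with hBdef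
  set A : ℝ := dist (z₁:ℂ) (z₂:ℂ) with hAdef
  -- distance formulas
  have hdist : ∀ i : ℤ, dist z₁ ((2 * Real.pi * (i:ℝ)) +ᵥ z₂)
      = 2 * Real.arsinh (B i / (2*s)) := by
    intro i
    rw [UpperHalfPlane.dist_eq]
    simp [coe_vadd, vadd_im, hBdef, hsdef]
  have hdA : dist z₁ z₂ = 2 * Real.arsinh (A / (2*s)) := by
    rw [UpperHalfPlane.dist_eq, hAdef, hsdef]
  -- A ≤ B i
  have habs : ∀ i : ℤ, A ≤ B i := by
    intro i
    have hi := h i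
    rw [hdA, hdist i] at hi
    have h2 : Real.arsinh (A / (2*s)) ≤ Real.arsinh (B i / (2*s)) := by linarith
    have h3 := Real.arsinh_le_arsinh.mp h2
    have h4 := mul_le_mul_of_nonneg_right h3 (le_of_lt (show (0:ℝ) < 2*s by positivity))
    rw [div_mul_cancel₀ _ (by positivity : (2*s) ≠ 0),
      div_mul_cancel₀ _ (by positivity : (2*s) ≠ 0)] at h4
    exact h4
  -- squared formulas
  have hBsq : ∀ i : ℤ, (B i)^2 = (x - 2*Real.pi*(i:ℝ))^2 + (z₁.im - z₂.im)^2 := by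
    intro i
    simp only [hBdef]
    rw [Complex.dist_eq, Complex.sq_norm, Complex.normSq_apply]
    simp only [Complex.sub_re, Complex.add_re, Complex.ofReal_re, Complex.sub_im,
      Complex.add_im, Complex.ofReal_im, coe_re, coe_im, hxdef]
    ring
  have hAsq : A^2 = x^2 + (z₁.im - z₂.im)^2 := by
    rw [hAdef, Complex.dist_eq, Complex.sq_norm, Complex.normSq_apply]
    simp only [Complex.sub_re, Complex.sub_im, coe_re, coe_im, hxdef]
    ring
  -- |x| ≤ π
  have hx : |x| ≤ Real.pi := by
    have h1 := pow_le_pow_left₀ dist_nonneg (habs 1) 2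
    have h2 := pow_le_pow_left₀ dist_nonneg (habs (-1)) 2
    rw [hAsq, hBsq] at h1 h2
    push_cast at h1 h2
    rw [abs_le]
    constructor <;> nlinarith
  -- lower bound for B i
  have hBlow : ∀ i : ℤ, i ≠ 0 → Real.pi * |(i:ℝ)| ≤ B i := by
    intro i hi
    have h1 : |((z₁:ℂ) - (((2*Real.pi*(i:ℝ) : ℝ):ℂ) + (z₂:ℂ))).re| ≤ B i := by
      simp only [hBdef, Complex.dist_eq]
      exact Complex.abs_re_le_norm _
    have hre : ((z₁:ℂ) - (((2*Real.pi*(i:ℝ) : ℝ):ℂ) + (z₂:ℂ))).re = x - 2*Real.pi*(i:ℝ) := by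
      simp only [Complex.sub_re, Complex.add_re, Complex.ofReal_re, coe_re, hxdef]
      ring
    rw [hre] at h1
    have hiabs : (1:ℝ) ≤ |(i:ℝ)| := by
      have := Int.one_le_abs hi
      calc (1:ℝ) = ((1:ℤ):ℝ) := by norm_num
        _ ≤ ((|i|:ℤ):ℝ) := by exact_mod_cast this
        _ = |(i:ℝ)| := by push_cast; ring
    have h2 := abs_sub_abs_le_abs_sub (2*Real.pi*(i:ℝ)) x
    have h2' : |2*Real.pi*(i:ℝ) - x| = |x - 2*Real.pi*(i:ℝ)| := abs_sub_comm _ _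
    have h3 : |2*Real.pi*(i:ℝ)| = 2*Real.pi*|(i:ℝ)| := by
      rw [abs_mul, abs_of_pos (by positivity : (0:ℝ) < 2*Real.pi)]
    nlinarith
  -- log lower bound for hyperbolic distance
  have hlog : ∀ i : ℤ, 2 * Real.log (1 + a * |(i:ℝ)|) ≤
      dist z₁ ((2 * Real.pi * (i:ℝ)) +ᵥ z₂) := by
    intro i
    rcases eq_or_ne i 0 with h0 | h0
    · subst h0
      simpa using dist_nonneg
    · rw [hdist i]
      have step1 : Real.log (1 + a*|(i:ℝ)|) ≤ Real.arsinh (a * |(i:ℝ)|) :=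
        log_le_arsinh (by positivity)
      have step2 : a * |(i:ℝ)| ≤ B i / (2*s) := by
        rw [hadef, div_mul_eq_mul_div]
        apply div_le_div_of_nonneg_right ?_ (by positivity)
        · exact hBlow i h0
      have step3 := Real.arsinh_le_arsinh.mpr step2
      linarith
  -- the majorant
  set c : ℝ := Real.exp (-dist z₁ z₂^2/(2*t)) * Real.exp (1/2) with hcdef
  have hc : 0 < c := by positivity
  set f : ℤ → ℝ := fun i => ((1 + a*|(i:ℝ)|)⁻¹)^2 with hfdef
  have hterm : ∀ i : ℤ, Real.exp (-dist z₁ ((2 * Real.pi * (i:ℝ)) +ᵥ z₂) ^ 2 / t) ≤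
      c * f i := by
    intro i
    set d : ℝ := dist z₁ z₂ with hddef
    set di : ℝ := dist z₁ ((2 * Real.pi * (i:ℝ)) +ᵥ z₂) with hdidef
    have hdd : d ≤ di := h i
    have hd0 : 0 ≤ d := dist_nonneg
    set L : ℝ := Real.log (1 + a*|(i:ℝ)|) with hLdef
    have hL0 : 0 ≤ L := Real.log_nonneg (by nlinarith [mul_nonneg ha.le (abs_nonneg ((i:ℝ)))])
    have h2L : 2*L ≤ di := hlog i
    have key : -di^2 / t ≤ -d^2/(2*t) + (1/2 - 2*L) := by
      have e1 : d^2/(2*t) ≤ di^2/(2*t) := by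
        apply div_le_div_of_nonneg_right ?_ (by positivity)
        · nlinarith
      have e2 : di^2/2 ≤ di^2/(2*t) := by
        apply div_le_div_of_nonneg_left (sq_nonneg _) (by positivity) (by linarith)
      have e3 : -di^2/t = -(di^2/(2*t)) - di^2/(2*t) := by
        field_simp
        ring
      have e4 : 2*L^2 ≤ di^2/2 := by nlinarith
      have e5 : 2*L - 2*L^2 ≤ 1/2 := by nlinarith [sq_nonneg (2*L-1)]
      have e6 : -d^2/(2*t) = -(d^2/(2*t)) := by ring
      linarith
    have hexpL : Real.exp (-(2*L)) = ((1 + a*|(i:ℝ)|)⁻¹)^2 := by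
      rw [show -(2*L) = ((2:ℕ):ℝ) * (-L) by push_cast; ring, Real.exp_nat_mul,
        Real.exp_neg, hLdef, Real.exp_log (by positivity)]
    calc Real.exp (-di^2/t) ≤ Real.exp (-d^2/(2*t) + (1/2 - 2*L)) := Real.exp_le_exp.mpr key
      _ = c * f i := by
          rw [Real.exp_add, show (1/2 - 2*L : ℝ) = 1/2 + -(2*L) by ring, Real.exp_add, hexpL,
            hcdef, hfdef]
          ring
  -- summability of the majorant over ℕ
  have hnat : Summable (fun n : ℕ => ((1 + a*(n:ℝ))⁻¹)^2) := by
    rw [← summable_nat_add_iff 1]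
    have := (aux_nat a ha).1
    simpa [Nat.cast_add, Nat.cast_one] using this
  have hfnat : (fun n : ℕ => f (n:ℤ)) = fun n : ℕ => ((1 + a*(n:ℝ))⁻¹)^2 := by
    funext n
    simp [hfdef, abs_of_nonneg (Nat.cast_nonneg n : (0:ℝ) ≤ (n:ℝ))]
  have hfneg : (fun n : ℕ => f (-(n:ℤ))) = fun n : ℕ => ((1 + a*(n:ℝ))⁻¹)^2 := by
    funext n
    simp [hfdef, abs_of_nonneg (Nat.cast_nonneg n : (0:ℝ) ≤ (n:ℝ))]
  have hfZ : Summable f := Summable.of_nat_of_neg (by rw [hfnat]; exact hnat)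
    (by rw [hfneg]; exact hnat)
  -- tsum of majorant bound
  have hshift₁ : (fun n : ℕ => f ((n:ℤ)+1)) = fun n : ℕ => ((1 + a*((n:ℝ)+1))⁻¹)^2 := by
    funext n
    simp only [hfdef]
    push_cast
    rw [abs_of_nonneg (show (0:ℝ) ≤ (n:ℝ)+1 by positivity)]
  have hshift₂ : (fun n : ℕ => f (-((n:ℤ)+1))) = fun n : ℕ => ((1 + a*((n:ℝ)+1))⁻¹)^2 := by
    funext n
    simp only [hfdef]
    push_cast
    rw [abs_neg, abs_of_nonneg (show (0:ℝ) ≤ (n:ℝ)+1 by positivity)]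
  have hsummable₁ : Summable (fun n : ℕ => f ((n:ℤ)+1)) := by
    rw [hshift₁]; exact (aux_nat a ha).1
  have hsummable₂ : Summable (fun n : ℕ => f (-((n:ℤ)+1))) := by
    rw [hshift₂]; exact (aux_nat a ha).1
  have htsumZ : ∑' i : ℤ, f i ≤ 1 + 2*(1/a) := by
    rw [tsum_of_add_one_of_neg_add_one hsummable₁ hsummable₂]
    have t1 : ∑' n : ℕ, f ((n:ℤ)+1) ≤ 1/a := by
      rw [hshift₁]; exact (aux_nat a ha).2
    have t2 : ∑' n : ℕ, f (-((n:ℤ)+1)) ≤ 1/a := by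
      rw [hshift₂]; exact (aux_nat a ha).2
    have t3 : f 0 = 1 := by simp [hfdef]
    linarith
  -- conclude
  have hsummable : Summable (fun i : ℤ =>
      Real.exp (-dist z₁ ((2 * Real.pi * (i:ℝ)) +ᵥ z₂) ^ 2 / t)) :=
    Summable.of_nonneg_of_le (fun i => (Real.exp_pos _).le) hterm (hfZ.mul_left c)
  refine ⟨hsummable, ?_⟩
  have hbound1 : ∑' i : ℤ, Real.exp (-dist z₁ ((2 * Real.pi * (i:ℝ)) +ᵥ z₂) ^ 2 / t)
      ≤ c * (1 + 2*(1/a)) := by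
    calc ∑' i : ℤ, Real.exp (-dist z₁ ((2 * Real.pi * (i:ℝ)) +ᵥ z₂) ^ 2 / t)
        ≤ ∑' i : ℤ, c * f i := Summable.tsum_le_tsum hterm hsummable (hfZ.mul_left c)
      _ = c * ∑' i : ℤ, f i := tsum_mul_left
      _ ≤ c * (1 + 2*(1/a)) := by
          apply mul_le_mul_of_nonneg_left htsumZ hc.le
  refine hbound1.trans ?_
  -- final constant comparison
  set S : ℝ := Real.sqrt ((z₁.im + 1) * (z₂.im + 1)) with hSdef
  have hsS : s ≤ S := by
    apply Real.sqrt_le_sqrt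
    nlinarith
  have h1S : 1 ≤ S := by
    have := Real.sq_sqrt (show (0:ℝ) ≤ (z₁.im + 1) * (z₂.im + 1) by positivity)
    nlinarith [Real.sqrt_nonneg ((z₁.im + 1) * (z₂.im + 1))]
  have hainv : 1/a = 2*s/Real.pi := by
    rw [hadef]
    field_simp
  have hfinal : 1 + 2*(1/a) ≤ (1 + 4/Real.pi) * S := by
    rw [hainv]
    have h4π : (0:ℝ) ≤ 4/Real.pi := by positivity
    have : 4/Real.pi * s ≤ 4/Real.pi * S := by
      apply mul_le_mul_of_nonneg_left hsS h4π
    have hdiv : 2*(2*s/Real.pi) = 4/Real.pi * s := by field_simp; ring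
    nlinarith
  calc c * (1 + 2*(1/a)) ≤ c * ((1 + 4/Real.pi) * S) := by
        apply mul_le_mul_of_nonneg_left hfinal hc.le
    _ = Real.exp (1/2) * (1 + 4/Real.pi) * S * Real.exp (-dist z₁ z₂ ^ 2 / (2 * t)) := by
        rw [hcdef]; ring
end

section
/- For all z, w in the hyperbolic upper half-plane ℍ with |Re z − Re w| ≤ π, and for every nonzero integer n, one has d(z, w + 2πn) ≥ log(n² / (Im z · Im w)). -/
/-!
Since `sinh ≤ cosh`, `exp (d/2) ≥ 2 sinh (d/2) = |z - w| / √(Im z · Im w)` for the hyperbolic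
distance `d`, i.e. `d ≥ log (|z - w|² / (Im z · Im w))`. For `w' = w + 2πn` the Euclidean distance
`|z - w'|` is at least `|Re z - Re w'| ≥ 2π|n| - π ≥ |n|`.
-/

open UpperHalfPlane Real

namespace UpperHalfPlane

theorem sq_dist_coe_div_le_exp_dist (z w : ℍ) :
    dist (z : ℂ) w ^ 2 / (z.im * w.im) ≤ exp (dist z w) := by
  have hsinh : 2 * sinh (dist z w / 2) ≤ exp (dist z w / 2) := by
    rw [← sinh_add_cosh]
    linarith [sinh_lt_cosh (dist z w / 2)]
  have hsinh_nonneg : 0 ≤ sinh (dist z w / 2) := by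
    rw [sinh_half_dist]
    positivity
  calc dist (z : ℂ) w ^ 2 / (z.im * w.im) = (2 * sinh (dist z w / 2)) ^ 2 := by
        rw [sinh_half_dist, mul_div_assoc', mul_div_mul_left _ _ two_ne_zero, div_pow,
          sq_sqrt (mul_pos z.im_pos w.im_pos).le]
    _ ≤ exp (dist z w / 2) ^ 2 := pow_le_pow_left₀ (mul_nonneg zero_le_two hsinh_nonneg) hsinh 2
    _ = exp (dist z w) := by rw [← exp_nat_mul]; ring_nf

theorem log_sq_dist_coe_div_le_dist (z w : ℍ) :
    log (dist (z : ℂ) w ^ 2 / (z.im * w.im)) ≤ dist z w := by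
  rcases eq_or_ne (z : ℂ) w with hzw | hzw
  · simp [hzw]
  have := z.im_pos
  have := w.im_pos
  have := dist_pos.2 hzw
  rw [log_le_iff_le_exp (by positivity)]
  exact sq_dist_coe_div_le_exp_dist z w

end UpperHalfPlane

theorem pi_mul_abs_le_abs_sub_two_pi_mul_intCast {x : ℝ} (hx : |x| ≤ π) {n : ℤ} (hn : n ≠ 0) :
    π * |(n : ℝ)| ≤ |x - 2 * π * n| := by
  have hn1 : (1 : ℝ) ≤ |(n : ℝ)| := by exact_mod_cast Int.one_le_abs hn
  calc π * |(n : ℝ)| ≤ 2 * π * |(n : ℝ)| - π := by nlinarith [pi_pos]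
    _ ≤ |2 * π * n| - |x| := by
        rw [abs_mul, abs_of_pos two_pi_pos]
        linarith
    _ ≤ |x - 2 * π * n| := by
        rw [abs_sub_comm]
        exact abs_sub_abs_le_abs_sub _ _

/-- For all `z, w` in the hyperbolic upper half-plane with
`|Re z − Re w| ≤ π`, and for every nonzero integer `n`, one has
`d(z, w + 2πn) ≥ log(n² / (Im z · Im w))`. -/
theorem dist_translate_ge_log :
    ∀ z w : UpperHalfPlane, |z.re - w.re| ≤ Real.pi →
      ∀ n : ℤ, n ≠ 0 →
        dist z ((2 * Real.pi * (n : ℝ)) +ᵥ w) ≥ Real.log ((n : ℝ) ^ 2 / (z.im * w.im)) := by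
  intro z w hre n hn
  set w' := (2 * π * (n : ℝ)) +ᵥ w
  have hn_sq_le : (n : ℝ) ^ 2 ≤ dist (z : ℂ) w' ^ 2 := by
    have hre' : |(n : ℝ)| ≤ |z.re - w'.re| := by
      rw [vadd_re, ← sub_sub, sub_right_comm]
      exact (le_mul_of_one_le_left (abs_nonneg _) (by linarith [pi_gt_three])).trans
        (pi_mul_abs_le_abs_sub_two_pi_mul_intCast hre hn)
    rw [← sq_abs (n : ℝ)]
    refine pow_le_pow_left₀ (abs_nonneg _) (hre'.trans ?_) 2
    rw [Complex.dist_eq]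
    exact Complex.abs_re_le_norm ((z : ℂ) - w')
  have hpos : 0 < z.im * w.im := mul_pos z.im_pos w.im_pos
  calc log ((n : ℝ) ^ 2 / (z.im * w.im)) ≤ log (dist (z : ℂ) w' ^ 2 / (z.im * w'.im)) := by
        rw [vadd_im]
        exact log_le_log (by positivity) (div_le_div_of_nonneg_right hn_sq_le hpos.le)
    _ ≤ dist z w' := log_sq_dist_coe_div_le_dist z w'
end

section
/- There exists C > 0 such that for all z₁, z₂ in the hyperbolic upper half-plane ℍ, the set {i ∈ ℤ : d(z₁, z₂ + 2πi) < 2} is finite and its cardinality is at most C · ((Im z₁ + 1)(Im z₂ + 1))^{1/2}. -/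
open UpperHalfPlane

/-! A hyperbolic ball of radius `r` around `z` lies in the Euclidean disc of radius
`2 sinh (r/2) √(Im z Im w)` around `w`, and the translates `2πi +ᵥ z₂` all have the same imaginary
part. So the `i` in question have `2πi` in a real interval of length `4 sinh 1 √(Im z₁ Im z₂)`,
which contains at most `(2 sinh 1 / π) √(Im z₁ Im z₂) + 1` such values. -/

namespace UpperHalfPlane

theorem abs_re_sub_re_le_of_dist_le {z w : ℍ} {r : ℝ} (h : dist z w ≤ r) :
    |z.re - w.re| ≤ 2 * Real.sinh (r / 2) * √(z.im * w.im) := by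
  rw [dist_le_iff_le_sinh, div_le_iff₀ (by positivity)] at h
  calc |z.re - w.re| = |((z : ℂ) - w).re| := rfl
    _ ≤ dist (z : ℂ) w := (Complex.abs_re_le_norm _).trans_eq (Complex.dist_eq _ _).symm
    _ ≤ 2 * Real.sinh (r / 2) * √(z.im * w.im) := by linarith

end UpperHalfPlane

namespace Int

theorem setOf_abs_sub_mul_le_eq_preimage_Icc {L : ℝ} (hL : 0 < L) (x r : ℝ) :
    {i : ℤ | |x - L * i| ≤ r} = ((↑) : ℤ → ℝ) ⁻¹' Set.Icc ((x - r) / L) ((x + r) / L) := by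
  ext i
  simp only [Set.mem_ofPred_eq, Set.mem_preimage, Set.mem_Icc, abs_le, div_le_iff₀ hL,
    le_div_iff₀ hL]
  constructor <;> rintro ⟨h₁, h₂⟩ <;> constructor <;> linarith

theorem finite_setOf_abs_sub_mul_le {L : ℝ} (hL : 0 < L) (x r : ℝ) :
    {i : ℤ | |x - L * i| ≤ r}.Finite := by
  rw [setOf_abs_sub_mul_le_eq_preimage_Icc hL, preimage_Icc]
  exact Set.finite_Icc _ _

theorem ncard_setOf_abs_sub_mul_le {L : ℝ} (hL : 0 < L) (x : ℝ) {r : ℝ} (hr : 0 ≤ r) :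
    ({i : ℤ | |x - L * i| ≤ r}.ncard : ℝ) ≤ 2 * r / L + 1 := by
  set a := (x - r) / L
  set b := (x + r) / L
  have hab : b - a = 2 * r / L := by simp only [a, b]; ring
  rw [setOf_abs_sub_mul_le_eq_preimage_Icc hL, preimage_Icc, ← Finset.coe_Icc,
    Set.ncard_coe_finset, card_Icc, ← hab]
  rcases le_or_gt (⌊b⌋ + 1 - ⌈a⌉) 0 with h | h
  · rw [toNat_of_nonpos h, Nat.cast_zero]
    have : a ≤ b := by simp only [a, b]; gcongr; linarith
    linarith
  · have hcast : ((⌊b⌋ + 1 - ⌈a⌉).toNat : ℝ) = ⌊b⌋ + 1 - ⌈a⌉ := by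
      exact_mod_cast toNat_of_nonneg h.le
    rw [hcast]
    linarith [floor_le b, le_ceil a]

end Int

theorem add_mul_sqrt_mul_le_mul_sqrt_add_one_mul {a b c : ℝ} (ha : 0 ≤ a) (hb : 0 ≤ b)
    (hc : 0 ≤ c) : c * √(a * b) + 1 ≤ (c + 1) * √((a + 1) * (b + 1)) := by
  have h₁ : √(a * b) ≤ √((a + 1) * (b + 1)) := Real.sqrt_le_sqrt (by nlinarith)
  have h₂ : 1 ≤ √((a + 1) * (b + 1)) := Real.one_le_sqrt.mpr (by nlinarith)
  nlinarith

/-- There exists `C > 0` such that for all `z₁, z₂` in the hyperbolic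
upper half-plane `ℍ`, the set `{i ∈ ℤ : d(z₁, z₂ + 2πi) < 2}` is finite and its
cardinality is at most `C · ((Im z₁ + 1)(Im z₂ + 1))^{1/2}`. -/
theorem card_close_deck_translates_le :
    ∃ C > (0 : ℝ), ∀ z₁ z₂ : UpperHalfPlane,
      {i : ℤ | dist z₁ ((2 * Real.pi * (i : ℝ)) +ᵥ z₂) < 2}.Finite ∧
      ({i : ℤ | dist z₁ ((2 * Real.pi * (i : ℝ)) +ᵥ z₂) < 2}.ncard : ℝ) ≤
        C * Real.sqrt ((z₁.im + 1) * (z₂.im + 1)) := by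
  refine ⟨2 * Real.sinh 1 / Real.pi + 1, by positivity, fun z₁ z₂ => ?_⟩
  have hL : 0 < 2 * Real.pi := by positivity
  set r := 2 * Real.sinh 1 * √(z₁.im * z₂.im)
  have hr : 0 ≤ r := by positivity
  have hsub : {i : ℤ | dist z₁ ((2 * Real.pi * (i : ℝ)) +ᵥ z₂) < 2} ⊆
      {i : ℤ | |(z₁.re - z₂.re) - 2 * Real.pi * i| ≤ r} := by
    intro i hi
    have h := abs_re_sub_re_le_of_dist_le (le_of_lt hi)
    rwa [vadd_re, vadd_im, div_self two_ne_zero, add_comm, ← sub_sub] at h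
  have hfin := Int.finite_setOf_abs_sub_mul_le hL (z₁.re - z₂.re) r
  refine ⟨hfin.subset hsub, ?_⟩
  calc _ ≤ ({i : ℤ | |(z₁.re - z₂.re) - 2 * Real.pi * i| ≤ r}.ncard : ℝ) := by
        exact_mod_cast Set.ncard_le_ncard hsub hfin
    _ ≤ 2 * r / (2 * Real.pi) + 1 := Int.ncard_setOf_abs_sub_mul_le hL _ hr
    _ = 2 * Real.sinh 1 / Real.pi * √(z₁.im * z₂.im) + 1 := by
        simp only [r]
        field_simp
    _ ≤ _ := add_mul_sqrt_mul_le_mul_sqrt_add_one_mul z₁.im_pos.le z₂.im_pos.le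
        (by positivity)
end

section
/- For all z, w in the hyperbolic upper half-plane ℍ there exists an integer k such that d(z, w + 2πk) ≤ |log(Im z) − log(Im w)| + 2π / max(Im z, Im w). -/
open UpperHalfPlane

/-!
Go from `z` vertically to the height `max z.im w.im` and then horizontally to the translate
of `w` whose real part is within `π` of `z.re`. The vertical leg has length
`|log z.im - log w.im|`, and a horizontal segment of Euclidean length `ℓ` at height `y` has
hyperbolic length at most `ℓ / y`.
-/

theorem exists_int_abs_sub_mul_le {p : ℝ} (hp : 0 < p) (x : ℝ) :
    ∃ k : ℤ, |x - p * k| ≤ p / 2 := by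
  refine ⟨round (x / p), ?_⟩
  calc |x - p * round (x / p)| = p * |x / p - round (x / p)| := by
        rw [← abs_of_pos hp, ← abs_mul, abs_of_pos hp, mul_sub, mul_div_cancel₀ x hp.ne']
    _ ≤ p * (1 / 2) := by gcongr; exact abs_sub_round _
    _ = p / 2 := by ring

namespace UpperHalfPlane

open Real

theorem dist_le_abs_re_sub_div_of_im_eq {z w : ℍ} (h : z.im = w.im) :
    dist z w ≤ |z.re - w.re| / z.im := by
  calc dist z w ≤ dist (z : ℂ) w / √(z.im * w.im) := dist_le_dist_coe_div_sqrt z w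
    _ = |z.re - w.re| / z.im := by
      rw [Complex.dist_of_im_eq h, ← h, sqrt_mul_self z.im_pos.le, Real.dist_eq]
      rfl

theorem dist_le_abs_log_im_sub_add_abs_re_sub_div_max (z w : ℍ) :
    dist z w ≤ |log z.im - log w.im| + |z.re - w.re| / max z.im w.im := by
  wlog hzw : z.im ≤ w.im generalizing z w
  · simpa only [dist_comm, abs_sub_comm, max_comm] using this w z (le_of_not_ge hzw)
  let corner : ℍ := mk ⟨z.re, w.im⟩ w.im_pos
  calc dist z w ≤ dist z corner + dist corner w := dist_triangle z corner w
    _ ≤ |log z.im - log w.im| + |z.re - w.re| / max z.im w.im := by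
      rw [max_eq_right hzw]
      gcongr
      · exact (dist_of_re_eq (show z.re = corner.re from rfl)).trans_le (Real.dist_eq _ _).le
      · exact dist_le_abs_re_sub_div_of_im_eq rfl

end UpperHalfPlane

/-- For all `z, w` in the hyperbolic upper half-plane `ℍ` there exists an
integer `k` such that
`d(z, w + 2πk) ≤ |log(Im z) − log(Im w)| + 2π / max(Im z, Im w)`. -/
theorem exists_deck_translate_dist_le (z w : UpperHalfPlane) :
    ∃ k : ℤ, dist z ((2 * Real.pi * (k : ℝ)) +ᵥ w) ≤
      |Real.log z.im - Real.log w.im| + 2 * Real.pi / max z.im w.im := by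
  obtain ⟨k, hk⟩ := exists_int_abs_sub_mul_le Real.two_pi_pos (z.re - w.re)
  refine ⟨k, (dist_le_abs_log_im_sub_add_abs_re_sub_div_max z _).trans ?_⟩
  rw [vadd_im, vadd_re]
  gcongr
  calc |z.re - (2 * Real.pi * k + w.re)| = |z.re - w.re - 2 * Real.pi * k| := by ring_nf
    _ ≤ 2 * Real.pi / 2 := hk
    _ ≤ 2 * Real.pi := by linarith [Real.pi_pos]
end

section
/- For every c′ > 0 and every ε ∈ (0, exp(−e)), there exists C > 0 such that for all t > 0: ∫_{{u ∈ ℂ : 0 < |u| < ε}} exp(−c′·(log(log(1/|u|)))²/t) · (|u|²·log(1/|u|))^{−1} dA(u) ≤ C·√t·exp(−(c′/2)·(log(log(1/ε)))²/t), where dA denotes Lebesgue measure on ℂ. -/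
open MeasureTheory Set Real
open scoped ENNReal

/-!
Substituting `‖u‖ = exp (-exp s)` turns the cusp measure `dA / (‖u‖² log (1 / ‖u‖))` on the
punctured disc of radius `exp (-exp s₀)` into `2π ds` on `s > s₀`, so the integral equals
`2π ∫_{s₀}^∞ exp (-c' s² / t) ds`. For `s ≥ s₀ ≥ 0` the integrand is at most
`exp (-c' s₀² / 2t) · exp (-c' s² / 2t)`, and the second factor integrates over `ℝ` to
`√(2π t / c')`.
-/

theorem Complex.lintegral_comp_norm {g : ℝ → ℝ≥0∞} (hg : Measurable g) :
    ∫⁻ u : ℂ, g ‖u‖ = ENNReal.ofReal (2 * π) * ∫⁻ r in Ioi 0, ENNReal.ofReal r * g r := by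
  have hpolar : ∫⁻ p in polarCoord.target, ENNReal.ofReal p.1 • g ‖Complex.polarCoord.symm p‖ =
      ∫⁻ p in polarCoord.target, ENNReal.ofReal p.1 * g p.1 :=
    setLIntegral_congr_fun polarCoord.open_target.measurableSet fun p hp => by
      rw [Complex.norm_polarCoord_symm, abs_of_pos hp.1, smul_eq_mul]
  have hmeas : Measurable fun p : ℝ × ℝ => ENNReal.ofReal p.1 * g p.1 := by fun_prop
  rw [← Complex.lintegral_comp_polarCoord_symm, hpolar, polarCoord_target,
    Measure.volume_eq_prod, ← Measure.prod_restrict, lintegral_prod _ hmeas.aemeasurable]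
  simp only [lintegral_const, Measure.restrict_apply MeasurableSet.univ, univ_inter,
    Real.volume_Ioo, sub_neg_eq_add, ← two_mul]
  rw [lintegral_mul_const' _ _ ENNReal.ofReal_ne_top, mul_comm]

theorem Complex.setLIntegral_preimage_norm {g : ℝ → ℝ≥0∞} (hg : Measurable g) {S : Set ℝ}
    (hS : MeasurableSet S) (hS0 : S ⊆ Ioi 0) :
    ∫⁻ u in (fun u : ℂ => ‖u‖) ⁻¹' S, g ‖u‖ =
      ENNReal.ofReal (2 * π) * ∫⁻ r in S, ENNReal.ofReal r * g r := by
  rw [← lintegral_indicator (hS.preimage continuous_norm.measurable)]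
  have hind : ∀ u : ℂ, ((fun u : ℂ => ‖u‖) ⁻¹' S).indicator (fun u => g ‖u‖) u =
      S.indicator g ‖u‖ := fun u => indicator_comp_right (fun u : ℂ => ‖u‖)
  simp_rw [hind, Complex.lintegral_comp_norm (hg.indicator hS), ← indicator_mul_right]
  rw [lintegral_indicator hS, Measure.restrict_restrict hS, inter_eq_left.2 hS0]

theorem lintegral_Ioo_exp_neg_exp (a : ℝ) (g : ℝ → ℝ≥0∞) :
    ∫⁻ r in Ioo 0 (exp (-exp a)), g r =
      ∫⁻ s in Ioi a, ENNReal.ofReal (exp (-exp s) * exp s) * g (exp (-exp s)) := by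
  have himage : (fun s => exp (-exp s)) '' Ioi a = Ioo 0 (exp (-exp a)) := by
    rw [show (fun s => exp (-exp s)) = exp ∘ Neg.neg ∘ exp from rfl, image_comp, image_comp,
      image_exp_Ioi, image_neg_Ioi, image_exp_Iio]
  have hinj : InjOn (fun s => exp (-exp s)) (Ioi a) := fun s _ s' _ h => by simpa using h
  rw [← himage, lintegral_image_eq_lintegral_abs_deriv_mul (f := fun s => exp (-exp s))
    measurableSet_Ioi (fun s _ => ((hasDerivAt_exp s).neg.exp).hasDerivWithinAt) hinj]
  simp only [mul_neg, abs_neg, abs_of_pos (mul_pos (exp_pos _) (exp_pos _))]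
  rfl

theorem lintegral_Ioi_exp_neg_mul_sq_le {a b : ℝ} (ha : 0 ≤ a) (hb : 0 < b) :
    ∫⁻ s in Ioi a, ENNReal.ofReal (exp (-b * s ^ 2)) ≤
      ENNReal.ofReal (exp (-b * a ^ 2 / 2) * √(2 * π / b)) := by
  have hsplit : ∀ s ∈ Ioi a, ENNReal.ofReal (exp (-b * s ^ 2)) ≤
      ENNReal.ofReal (exp (-b * a ^ 2 / 2) * exp (-(b / 2) * s ^ 2)) := fun s hs => by
    have hsq : a ^ 2 ≤ s ^ 2 := pow_le_pow_left₀ ha (le_of_lt hs) 2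
    rw [← exp_add]
    gcongr
    nlinarith [mul_nonneg hb.le (sub_nonneg.2 hsq)]
  have hint : Integrable fun s => exp (-b * a ^ 2 / 2) * exp (-(b / 2) * s ^ 2) :=
    (integrable_exp_neg_mul_sq (half_pos hb)).const_mul _
  calc ∫⁻ s in Ioi a, ENNReal.ofReal (exp (-b * s ^ 2))
      ≤ ∫⁻ s in Ioi a, ENNReal.ofReal (exp (-b * a ^ 2 / 2) * exp (-(b / 2) * s ^ 2)) :=
        setLIntegral_mono (by fun_prop) hsplit
    _ ≤ ∫⁻ s, ENNReal.ofReal (exp (-b * a ^ 2 / 2) * exp (-(b / 2) * s ^ 2)) :=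
        setLIntegral_le_lintegral _ _
    _ = ENNReal.ofReal (exp (-b * a ^ 2 / 2) * √(2 * π / b)) := by
      rw [← ofReal_integral_eq_lintegral_ofReal hint (ae_of_all _ fun _ => by positivity),
        integral_const_mul, integral_gaussian]
      congr 3
      field_simp

theorem lintegral_punctured_disc_loglog (a : ℝ) {φ : ℝ → ℝ} (hφ : Measurable φ) :
    ∫⁻ u in {u : ℂ | 0 < ‖u‖ ∧ ‖u‖ < exp (-exp a)},
        ENNReal.ofReal (φ (log (log (1 / ‖u‖))) * (‖u‖ ^ 2 * log (1 / ‖u‖))⁻¹) =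
      ENNReal.ofReal (2 * π) * ∫⁻ s in Ioi a, ENNReal.ofReal (φ s) := by
  set G : ℝ → ℝ≥0∞ := fun r => ENNReal.ofReal (φ (log (log (1 / r))) * (r ^ 2 * log (1 / r))⁻¹)
  have hG : Measurable G := by unfold G; fun_prop
  rw [show {u : ℂ | 0 < ‖u‖ ∧ ‖u‖ < exp (-exp a)} = (fun u : ℂ => ‖u‖) ⁻¹' Ioo 0 (exp (-exp a))
      from rfl, Complex.setLIntegral_preimage_norm hG measurableSet_Ioo Ioo_subset_Ioi_self,
    lintegral_Ioo_exp_neg_exp]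
  congr 1
  refine setLIntegral_congr_fun measurableSet_Ioi fun s _ => ?_
  have hlog : log (1 / exp (-exp s)) = exp s := by rw [one_div, ← exp_neg, neg_neg, log_exp]
  simp only [G, hlog, log_exp]
  rw [← ENNReal.ofReal_mul (by positivity), ← ENNReal.ofReal_mul (by positivity)]
  congr 1
  field_simp

/-- For every `c′ > 0` and every `ε ∈ (0, exp(−e))`, there exists `C > 0`
such that for all `t > 0`:
`∫_{0 < |u| < ε} exp(−c′·(log log(1/|u|))²/t) · (|u|²·log(1/|u|))⁻¹ dA(u)
  ≤ C·√t·exp(−(c′/2)·(log log(1/ε))²/t)`,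
where `dA` is Lebesgue measure on `ℂ`. -/
theorem cusp_gaussian_integral_estimate (c' : ℝ) (hc' : 0 < c')
    (ε : ℝ) (hε0 : 0 < ε) (hε1 : ε < Real.exp (-Real.exp 1)) :
    ∃ C > (0 : ℝ), ∀ t > (0 : ℝ),
      ∫⁻ u in {u : ℂ | 0 < ‖u‖ ∧ ‖u‖ < ε},
          ENNReal.ofReal
            (Real.exp (-c' * Real.log (Real.log (1 / ‖u‖)) ^ 2 / t) *
              (‖u‖ ^ 2 * Real.log (1 / ‖u‖))⁻¹) ≤
        ENNReal.ofReal
          (C * Real.sqrt t * Real.exp (-(c' / 2) * Real.log (Real.log (1 / ε)) ^ 2 / t)) := by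
  set a := log (log (1 / ε))
  have hlog : exp 1 < log (1 / ε) := by
    rwa [one_div, lt_log_iff_exp_lt (by positivity), lt_inv_comm₀ (exp_pos _) hε0, ← exp_neg]
  have ha : 1 < a := by simpa only [log_exp] using log_lt_log (exp_pos 1) hlog
  have hε : exp (-exp a) = ε := by
    rw [exp_log ((exp_pos 1).trans hlog), one_div, log_inv, neg_neg, exp_log hε0]
  refine ⟨2 * π * √(2 * π / c'), by positivity, fun t ht => ?_⟩
  have hdisc := lintegral_punctured_disc_loglog a (φ := fun s => exp (-c' * s ^ 2 / t))
    (by fun_prop)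
  rw [hε] at hdisc
  have hgauss (s : ℝ) : -c' * s ^ 2 / t = -(c' / t) * s ^ 2 := by ring
  calc _ = ENNReal.ofReal (2 * π) * ∫⁻ s in Ioi a, ENNReal.ofReal (exp (-(c' / t) * s ^ 2)) := by
        simp_rw [hdisc, hgauss]
    _ ≤ ENNReal.ofReal (2 * π) *
          ENNReal.ofReal (exp (-(c' / t) * a ^ 2 / 2) * √(2 * π / (c' / t))) := by
        gcongr
        exact lintegral_Ioi_exp_neg_mul_sq_le (by linarith) (by positivity)
    _ = _ := by
        have hsqrt : √(2 * π / (c' / t)) = √(2 * π / c') * √t := by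
          rw [← sqrt_mul' _ ht.le]
          congr 1
          field_simp
        rw [hsqrt, ← ENNReal.ofReal_mul (by positivity)]
        congr 1
        ring_nf
end
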